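/- arXiv:0909.4340 — 3 statements merged into one kernel-verified Lean document; each statement's English description precedes it below -/
import Mathlib

section
/- If σ ∈ G_A and B = dcl(A ∪ {b}) with σ(b) ∈ B, then σ(B) = B. That is, a group element fixing A pointwise and sending a generator of B into B maps B onto itself. -/
open Pointwise

/-- Definable closure: `m` is fixed by every group element fixing `A` pointwise. -/
def dcl (G : Type*) {M : Type*} [Group G] [MulAction G M] (A : Set M) : Set M :=
  {m | ∀ g : G, (∀ a ∈ A, g • a = a) → g • m = m}

/-- The orbit of `b` under the pointwise stabilizer of `A`. -/
def orb (G : Type*) {M : Type*} [Group G] [MulAction G M] (A : Set M) (b : M) : Set M :=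
  {x | ∃ g : G, (∀ a ∈ A, g • a = a) ∧ g • b = x}

/-- If `σ` fixes `A` pointwise and sends the generator `b` of `B = dcl(A ∪ {b})`
into `B`, then `σ` maps `B` onto itself. -/
theorem smul_dcl_eq_self {G M : Type*} [Group G] [MulAction G M]
    (A : Set M) (b : M) (hb : (orb G A b).Finite)
    (σ : G) (hσ : ∀ a ∈ A, σ • a = a)
    (h : σ • b ∈ dcl G (A ∪ {b})) :
    σ • dcl G (A ∪ {b}) = dcl G (A ∪ {b}) := by
  -- Step 1: σ maps B into B
  have hstep : ∀ x ∈ dcl G (A ∪ {b}), σ • x ∈ dcl G (A ∪ {b}) := by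
    intro x hx g hg
    have hgb : g • (σ • b) = σ • b := h g hg
    have hfix : ∀ a ∈ A ∪ {b}, (σ⁻¹ * g * σ) • a = a := by
      rintro a (ha | rfl)
      · have h1 := hg a (Or.inl ha)
        rw [mul_smul, mul_smul, hσ a ha, h1, inv_smul_eq_iff, hσ a ha]
      · rw [mul_smul, mul_smul, hgb, inv_smul_smul]
    have h2 := hx _ hfix
    rw [mul_smul, mul_smul, inv_smul_eq_iff] at h2
    exact h2
  -- iterated step
  have hiter : ∀ j : ℕ, ∀ x ∈ dcl G (A ∪ {b}), σ ^ j • x ∈ dcl G (A ∪ {b}) := by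
    intro j
    induction j with
    | zero => intro x hx; simpa using hx
    | succ j ih =>
      intro x hx
      have := hstep _ (ih x hx)
      rw [smul_smul, ← pow_succ'] at this
      exact this
  -- powers of σ fix A pointwise
  have hpowA : ∀ k : ℕ, ∀ a ∈ A, σ ^ k • a = a := by
    intro k
    induction k with
    | zero => intro a _; simp
    | succ k ih =>
      intro a ha
      rw [pow_succ, mul_smul, hσ a ha, ih a ha]
  -- finiteness: some positive power of σ fixes b
  obtain ⟨k, hk1, hkb⟩ : ∃ k : ℕ, 1 ≤ k ∧ σ ^ k • b = b := by
    have hmem : ∀ n : ℕ, σ ^ n • b ∈ orb G A b := fun n => ⟨σ ^ n, hpowA n, rfl⟩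
    have hninj : ¬ Function.Injective (fun n : ℕ => σ ^ n • b) := by
      intro hinj
      exact (Set.infinite_of_injective_forall_mem hinj hmem) hb
    rw [Function.not_injective_iff] at hninj
    obtain ⟨n, m, heq, hne⟩ := hninj
    rcases hne.lt_or_gt with hlt | hlt
    · refine ⟨m - n, by omega, ?_⟩
      have h1 : σ ^ n • σ ^ (m - n) • b = σ ^ n • b := by
        rw [smul_smul, ← pow_add, Nat.add_sub_cancel' hlt.le, heq]
      exact smul_left_cancel _ h1
    · refine ⟨n - m, by omega, ?_⟩
      have h1 : σ ^ m • σ ^ (n - m) • b = σ ^ m • b := by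
        rw [smul_smul, ← pow_add, Nat.add_sub_cancel' hlt.le, ← heq]
      exact smul_left_cancel _ h1
  -- σ^k fixes B pointwise
  have hfixB : ∀ x ∈ dcl G (A ∪ {b}), σ ^ k • x = x := by
    intro x hx
    refine hx (σ ^ k) ?_
    rintro a (ha | rfl)
    · exact hpowA k a ha
    · exact hkb
  ext x
  constructor
  · rintro ⟨y, hy, rfl⟩
    exact hstep y hy
  · intro hx
    refine ⟨σ ^ (k - 1) • x, hiter (k - 1) x hx, ?_⟩
    show σ • σ ^ (k - 1) • x = x
    rw [smul_smul, ← pow_succ']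
    have : k - 1 + 1 = k := by omega
    rw [this, hfixB x hx]
end

section
/- If A ⊆ B ⊆ C with C normal over A, B definably closed, and B not normal over A, then Aut(C/B) is not a normal subgroup of Aut(C/A). Concretely: if there exist b ∈ B and c, d ∈ O(b/A) with c, d ∉ B, c ≠ d, and d ∈ O(c/B), then there exist h ∈ Aut(C/B) and g ∈ Aut(C/A) with g⁻¹hg ∉ Aut(C/B). -/
/-- If `A ⊆ B ⊆ C` with `C` normal over `A` and `B` definably closed but not
normal over `A` — witnessed by `b ∈ B` and `c, d ∈ O(b/A)` with `c, d ∉ B`,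
`c ≠ d`, `d ∈ O(c/B)` — then `Aut(C/B)` is not normal in `Aut(C/A)`: there are
`h` fixing `B` pointwise and `g` fixing `A` pointwise with `g⁻¹hg` not fixing
`B` pointwise. -/
theorem aut_not_normal {G M : Type*} [Group G] [MulAction G M]
    (A B C : Set M) (hAB : A ⊆ B) (hBC : B ⊆ C)
    (hCinv : ∀ g : G, (∀ a ∈ A, g • a = a) → ∀ x ∈ C, g • x ∈ C)
    (hBdc : dcl G B = B)
    (b c d : M) (hbB : b ∈ B)
    (hc : c ∈ orb G A b) (hd : d ∈ orb G A b)
    (hcB : c ∉ B) (hdB : d ∉ B) (hcd : c ≠ d) (hdOc : d ∈ orb G B c) :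
    ∃ h g : G, (∀ x ∈ B, h • x = x) ∧ (∀ a ∈ A, g • a = a) ∧
      ∃ x ∈ B, (g⁻¹ * h * g) • x ≠ x := by
  obtain ⟨g, hgA, hgb⟩ := hc
  obtain ⟨h, hhB, hhc⟩ := hdOc
  refine ⟨h, g, hhB, hgA, b, hbB, ?_⟩
  intro heq
  rw [mul_smul, mul_smul, hgb, hhc, inv_smul_eq_iff] at heq
  exact hcd (heq.trans hgb).symm
end

section
/- Other half of the Galois correspondence under coding of finite sets: for any subgroup H ≤ G := Aut(C/A), Fix(Fix(H)) = H. Specifically, if c generates C over A (C = dcl(A ∪ {c})) and b is a code for the finite orbit F := { h(c) : h ∈ H }, then the entries of b lie in Fix(H), and any g ∈ G fixing b lies in H. -/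
open Pointwise

/-- Other half of the Galois correspondence, under coding of finite sets.
`G` is a finite group acting on `M` with each `g` determined by `g • c`
(`C = dcl(A ∪ {c})` with the action faithful), `H` a subgroup, `F` the
`H`-orbit of the generator `c`, and `b` a tuple coding `F`. Then the entries of
`b` lie in `Fix(H)`, and every `g` fixing `Fix(H)` pointwise lies in `H`:
`Fix(Fix(H)) = H`. -/
theorem fix_fix_subgroup {G M : Type*} [Group G] [Fintype G] [MulAction G M]
    (c : M) (hdet : ∀ g g' : G, g • c = g' • c → g = g')
    (H : Subgroup G) {ι : Type*} (b : ι → M)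
    (hcode : ∀ g : G,
      (∀ i, g • b i = b i) ↔ g • {x | ∃ h ∈ H, h • c = x} = {x | ∃ h ∈ H, h • c = x}) :
    (∀ i, ∀ h ∈ H, h • b i = b i) ∧
    {g : G | ∀ x : M, (∀ h ∈ H, h • x = x) → g • x = x} = (H : Set G) := by
  have hstab : ∀ h ∈ H, h • {x | ∃ h ∈ H, h • c = x} = {x | ∃ h ∈ H, h • c = x} := by
    intro h hh
    ext x
    simp only [Set.mem_smul_set, Set.mem_setOf_eq]
    constructor
    · rintro ⟨y, ⟨k, hk, rfl⟩, rfl⟩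
      exact ⟨h * k, H.mul_mem hh hk, (mul_smul h k c)⟩
    · rintro ⟨k, hk, rfl⟩
      exact ⟨(h⁻¹ * k) • c, ⟨h⁻¹ * k, H.mul_mem (H.inv_mem hh) hk, rfl⟩,
        by rw [smul_smul, mul_inv_cancel_left]⟩
  have part1 : ∀ i, ∀ h ∈ H, h • b i = b i := fun i h hh => (hcode h).mpr (hstab h hh) i
  refine ⟨part1, ?_⟩
  ext g
  simp only [Set.mem_setOf_eq, SetLike.mem_coe]
  constructor
  · intro hg
    have hfix : ∀ i, g • b i = b i := fun i => hg (b i) (fun h hh => part1 i h hh)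
    have hS := (hcode g).mp hfix
    have hc : g • c ∈ g • {x | ∃ h ∈ H, h • c = x} :=
      ⟨c, ⟨1, H.one_mem, one_smul _ _⟩, rfl⟩
    rw [hS] at hc
    obtain ⟨h, hh, hhc⟩ := hc
    exact hdet g h hhc.symm ▸ hh
  · intro hg x hx
    exact hx g hg
end
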